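/- arXiv:math/0610546 — 3 statements merged into one kernel-verified Lean document; each statement's English description precedes it below -/
import Mathlib

section
/- For all natural numbers n ≥ 1 and k ≥ 0: r_{2n-1}(1,-q^k) / r_{2n}(1,-1) = Σ_{j=0}^{⌊(k-1)/2⌋} (-1)^j q^{j^2} q^{2jn} [k-j-1 choose j]_{q^2} Π_{i=1}^{k-1-2j} (1+q^i), where r_m(x,a) = Σ_ℓ [m choose ℓ]_q x^ℓ a^{m-ℓ} and r_{2n}(1,-1) = Π_{i=1}^n (1-q^{2i-1}). -/
open Finset

/-- The indeterminate `q`, as an element of the field of rational functions over `ℚ`. -/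
noncomputable def q : RatFunc ℚ := RatFunc.X

/-- The Gaussian (q-)binomial coefficient `[n choose k]_t` with base `t`,
defined as `(1-t^(n-k+1))⋯(1-t^n) / ((1-t)⋯(1-t^k))` for `0 ≤ k ≤ n` and `0` otherwise. -/
noncomputable def qb (t : RatFunc ℚ) (n k : ℤ) : RatFunc ℚ :=
  if 0 ≤ k ∧ k ≤ n then
    (∏ i ∈ Finset.range k.toNat, (1 - t ^ (n - (i : ℤ)))) /
      (∏ i ∈ Finset.range k.toNat, (1 - t ^ ((i : ℤ) + 1)))
  else 0

def Good (t : RatFunc ℚ) : Prop := ∀ i : ℕ, i ≠ 0 → t ^ i ≠ 1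

lemma q_pow_ne_one : Good q := by
  intro i hi h
  have hX : (q : RatFunc ℚ)^i = algebraMap (Polynomial ℚ) (RatFunc ℚ) (Polynomial.X ^ i) := by
    simp [q, map_pow, RatFunc.algebraMap_X]
  rw [hX] at h
  have h1 : algebraMap (Polynomial ℚ) (RatFunc ℚ) (Polynomial.X ^ i) = algebraMap (Polynomial ℚ) (RatFunc ℚ) 1 := by simpa using h
  have := RatFunc.algebraMap_injective (K := ℚ) h1
  have := congrArg Polynomial.natDegree this
  simp [Polynomial.natDegree_X_pow] at this
  exact hi this

lemma good_q2 : Good (q ^ 2) := by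
  intro i hi
  rw [← pow_mul]
  exact q_pow_ne_one (2 * i) (by omega)

lemma good_sub_ne (t : RatFunc ℚ) (ht : Good t) (s : ℕ) : 1 - t ^ (s + 1) ≠ 0 :=
  sub_ne_zero_of_ne (Ne.symm (ht (s + 1) (by omega)))

noncomputable def Fac (t : RatFunc ℚ) (s : ℕ) : RatFunc ℚ := ∏ i ∈ Finset.range s, (1 - t ^ (i + 1))

lemma fac_succ (t : RatFunc ℚ) (s : ℕ) : Fac t (s + 1) = Fac t s * (1 - t ^ (s + 1)) := by
  simp [Fac, Finset.prod_range_succ]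

lemma fac_ne (t : RatFunc ℚ) (ht : Good t) (s : ℕ) : Fac t s ≠ 0 := by
  apply Finset.prod_ne_zero_iff.mpr
  intro i _
  exact good_sub_ne t ht i

lemma fac_div (t : RatFunc ℚ) (ht : Good t) (m l : ℕ) (h : l ≤ m) :
    Fac t (m - l) * (∏ i ∈ Finset.range l, (1 - t ^ (m - i))) = Fac t m := by
  induction l with
  | zero => simp [Fac]
  | succ l ih =>
    have hl : l ≤ m := by omega
    rw [Finset.prod_range_succ]
    have h1 : m - l = (m - (l+1)) + 1 := by omega
    have h2 : m - l = (m - (l+1)) + 1 := by omega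
    calc Fac t (m - (l+1)) * ((∏ i ∈ Finset.range l, (1 - t ^ (m - i))) * (1 - t ^ (m - l)))
        = (Fac t (m - (l+1)) * (1 - t ^ (m - l))) * (∏ i ∈ Finset.range l, (1 - t ^ (m - i))) := by ring
      _ = Fac t (m - l) * (∏ i ∈ Finset.range l, (1 - t ^ (m - i))) := by
          rw [h1, fac_succ]
      _ = Fac t m := ih hl

lemma qb_eq (t : RatFunc ℚ) (ht : Good t) (m l : ℕ) (h : l ≤ m) :
    qb t (m : ℤ) (l : ℤ) = Fac t m / (Fac t l * Fac t (m - l)) := by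
  rw [qb, if_pos ⟨Int.natCast_nonneg l, by exact_mod_cast h⟩]
  have h1 : (∏ i ∈ Finset.range (l:ℤ).toNat, (1 - t ^ ((m:ℤ) - (i : ℤ)))) =
      ∏ i ∈ Finset.range l, (1 - t ^ (m - i)) := by
    rw [Int.toNat_natCast]
    apply Finset.prod_congr rfl
    intro i hi
    have hil : i < l := Finset.mem_range.mp hi
    have : (m : ℤ) - (i:ℤ) = ((m - i : ℕ) : ℤ) := by omega
    rw [this, zpow_natCast]
  have h2 : (∏ i ∈ Finset.range (l:ℤ).toNat, (1 - t ^ ((i:ℤ) + 1))) = Fac t l := by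
    rw [Int.toNat_natCast, Fac]
    apply Finset.prod_congr rfl
    intro i _
    have : (i : ℤ) + 1 = ((i + 1 : ℕ) : ℤ) := by omega
    rw [this, zpow_natCast]
  rw [h1, h2]
  have h3 : (∏ i ∈ Finset.range l, (1 - t ^ (m - i))) = Fac t m / Fac t (m - l) := by
    rw [eq_div_iff (fac_ne t ht (m - l)), mul_comm]
    exact fac_div t ht m l h
  rw [h3, div_div, mul_comm (Fac t l)]

lemma qb_zero_of_lt (t : RatFunc ℚ) (n k : ℤ) (h : n < k) : qb t n k = 0 := by
  rw [qb, if_neg]; omega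

lemma qb_self (t : RatFunc ℚ) (ht : Good t) (s : ℕ) : qb t (s : ℤ) (s : ℤ) = 1 := by
  rw [qb_eq t ht s s le_rfl]
  rw [show s - s = 0 by omega]
  simp only [Fac, Finset.range_zero, Finset.prod_empty, mul_one]
  exact div_self (fac_ne t ht s)

lemma qb_zero_col (t : RatFunc ℚ) (n : ℤ) (hn : 0 ≤ n) : qb t n 0 = 1 := by
  rw [qb, if_pos ⟨le_rfl, hn⟩]
  simp

lemma qb_symm (t : RatFunc ℚ) (ht : Good t) (m l : ℕ) (h : l ≤ m) :
    qb t (m : ℤ) (l : ℤ) = qb t (m : ℤ) ((m - l : ℕ) : ℤ) := by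
  rw [qb_eq t ht m l h, qb_eq t ht m (m - l) (by omega)]
  rw [show m - (m - l) = l by omega]
  ring

lemma qb_absorb (t : RatFunc ℚ) (ht : Good t) (l e : ℕ) :
    (1 - t ^ (l + 1)) * qb t ((l + 1 + e : ℕ) : ℤ) ((l + 1 : ℕ) : ℤ) =
      (1 - t ^ (e + 1)) * qb t ((l + 1 + e : ℕ) : ℤ) (l : ℤ) := by
  rw [qb_eq t ht _ _ (by omega), qb_eq t ht _ _ (by omega)]
  rw [show l + 1 + e - (l + 1) = e by omega, show l + 1 + e - l = e + 1 by omega,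
    fac_succ t l, fac_succ t e]
  have h1 := fac_ne t ht l
  have h2 := fac_ne t ht e
  have h3 := good_sub_ne t ht l
  have h4 := good_sub_ne t ht e
  field_simp

-- Rogers–Szegő polynomial
noncomputable def hh (m : ℕ) (x : RatFunc ℚ) : RatFunc ℚ :=
  ∑ l ∈ Finset.range (m + 1), qb q (m : ℤ) (l : ℤ) * x ^ l

-- Pascal variant A: [m+1, l+1] = [m, l] + q^(l+1) [m, l+1]
lemma pascalA (m l : ℕ) (h : l ≤ m) :
    qb q ((m + 1 : ℕ) : ℤ) ((l + 1 : ℕ) : ℤ) =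
      qb q (m : ℤ) (l : ℤ) + q ^ (l + 1) * qb q (m : ℤ) ((l + 1 : ℕ) : ℤ) := by
  rcases Nat.lt_or_ge l m with hlt | hge
  · obtain ⟨e, rfl⟩ : ∃ e, m = l + 1 + e := ⟨m - (l + 1), by omega⟩
    rw [qb_eq q q_pow_ne_one _ _ (by omega), qb_eq q q_pow_ne_one _ _ (by omega),
      qb_eq q q_pow_ne_one _ _ (by omega)]
    rw [show l + 1 + e + 1 - (l + 1) = e + 1 by omega, show l + 1 + e - l = e + 1 by omega,
      show l + 1 + e - (l + 1) = e by omega, show l + 1 + e + 1 = (l + 1 + e) + 1 by omega]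
    rw [fac_succ q (l + 1 + e), fac_succ q e, fac_succ q l]
    have h1 := fac_ne q q_pow_ne_one l
    have h2 := fac_ne q q_pow_ne_one e
    have h3 := fac_ne q q_pow_ne_one (l + 1 + e)
    have h4 := good_sub_ne q q_pow_ne_one l
    have h5 := good_sub_ne q q_pow_ne_one e
    have h6 := good_sub_ne q q_pow_ne_one (l + 1 + e)
    field_simp
    ring
  · have : l = m := by omega
    subst this
    rw [qb_self q q_pow_ne_one, qb_self q q_pow_ne_one,
      qb_zero_of_lt q _ _ (by exact_mod_cast by omega)]
    ring

-- row absorption: (1 - q^(l+1)) [m+1, l+1] = (1 - q^(m+1)) [m, l]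
lemma rowAbsorb (m l : ℕ) (h : l ≤ m) :
    (1 - q ^ (l + 1)) * qb q ((m + 1 : ℕ) : ℤ) ((l + 1 : ℕ) : ℤ) =
      (1 - q ^ (m + 1)) * qb q (m : ℤ) (l : ℤ) := by
  obtain ⟨e, rfl⟩ : ∃ e, m = l + e := ⟨m - l, by omega⟩
  rw [qb_eq q q_pow_ne_one _ _ (by omega), qb_eq q q_pow_ne_one _ _ (by omega)]
  rw [show l + e + 1 - (l + 1) = e by omega, show l + e - l = e by omega,
    show l + e + 1 = (l + e) + 1 by omega]
  rw [fac_succ q (l + e), fac_succ q l]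
  have h1 := fac_ne q q_pow_ne_one l
  have h2 := fac_ne q q_pow_ne_one e
  have h3 := fac_ne q q_pow_ne_one (l + e)
  have h4 := good_sub_ne q q_pow_ne_one l
  have h5 := good_sub_ne q q_pow_ne_one (l + e)
  field_simp

-- R1: hh (m+1) x = x * hh m x + hh m (q * x)
lemma hh_R1 (m : ℕ) (x : RatFunc ℚ) :
    hh (m + 1) x = x * hh m x + hh m (q * x) := by
  rw [hh, Finset.sum_range_succ', hh, hh]
  push_cast
  rw [qb_zero_col q _ (by positivity : (0:ℤ) ≤ (m:ℤ)+1)]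
  have key : ∀ l ∈ Finset.range (m + 1),
      qb q ((m:ℤ) + 1) ((l:ℤ) + 1) * x ^ (l + 1) =
        (qb q (m:ℤ) (l:ℤ) * x ^ l) * x + qb q (m:ℤ) ((l:ℤ)+1) * (q*x) ^ (l+1) := by
    intro l hl
    have hlm : l ≤ m := Nat.lt_succ_iff.mp (Finset.mem_range.mp hl)
    have hp := pascalA m l hlm
    push_cast at hp
    rw [hp, mul_pow]
    ring
  rw [Finset.sum_congr rfl key, Finset.sum_add_distrib]
  have h4 : ∑ l ∈ Finset.range (m + 1), qb q (m:ℤ) (l:ℤ) * (q*x) ^ l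
      = 1 + ∑ l ∈ Finset.range m, qb q (m:ℤ) ((l:ℤ)+1) * (q*x) ^ (l+1) := by
    rw [Finset.sum_range_succ']
    push_cast
    rw [qb_zero_col q _ (Int.natCast_nonneg m), pow_zero, mul_one, add_comm]
  have h5 : ∑ l ∈ Finset.range (m+1), qb q (m:ℤ) ((l:ℤ)+1) * (q*x) ^ (l+1)
      = ∑ l ∈ Finset.range m, qb q (m:ℤ) ((l:ℤ)+1) * (q*x) ^ (l+1) := by
    rw [Finset.sum_range_succ, qb_zero_of_lt q _ _ (by omega)]
    simp
  rw [h5, h4, Finset.mul_sum]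
  have h6 : ∀ l ∈ Finset.range (m+1), x * (qb q (m:ℤ) (l:ℤ) * x ^ l) = qb q (m:ℤ) (l:ℤ) * x ^ l * x := by
    intro l _; ring
  rw [Finset.sum_congr rfl h6]
  ring

-- Cx: hh (m+1) (q*x) = hh (m+1) x - x * (1 - q^(m+1)) * hh m x
lemma hh_Cx (m : ℕ) (x : RatFunc ℚ) :
    hh (m + 1) (q * x) = hh (m + 1) x - x * (1 - q ^ (m + 1)) * hh m x := by
  have key : hh (m + 1) x - hh (m + 1) (q * x) = x * (1 - q ^ (m + 1)) * hh m x := by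
    rw [hh, hh, ← Finset.sum_sub_distrib]
    have e1 : ∀ l ∈ Finset.range (m + 2),
        (qb q ((m+1 : ℕ):ℤ) (l:ℤ) * x ^ l - qb q ((m+1 : ℕ):ℤ) (l:ℤ) * (q*x) ^ l)
          = ((1 - q ^ l) * qb q ((m+1 : ℕ):ℤ) (l:ℤ)) * x ^ l := by
      intro l _
      rw [mul_pow]
      ring
    rw [Finset.sum_congr rfl e1, Finset.sum_range_succ']
    push_cast
    simp only [pow_zero, sub_self, zero_mul, mul_one, add_zero]
    have e2 : ∀ l ∈ Finset.range (m + 1),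
        ((1 - q ^ (l+1)) * qb q ((m:ℤ)+1) ((l:ℤ)+1)) * x ^ (l+1)
          = x * (1 - q ^ (m + 1)) * (qb q (m:ℤ) (l:ℤ) * x ^ l) := by
      intro l hl
      have hlm : l ≤ m := Nat.lt_succ_iff.mp (Finset.mem_range.mp hl)
      have hr := rowAbsorb m l hlm
      push_cast at hr
      rw [hr]
      ring
    rw [Finset.sum_congr rfl e2, ← Finset.mul_sum, hh]
  linear_combination -key

-- hh at -1, odd index, vanishes
lemma hh_odd (s : ℕ) : hh (2 * s + 1) (-1) = 0 := by
  set m := 2 * s + 1 with hm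
  have hrefl : hh m (-1) = ∑ l ∈ Finset.range (m + 1), qb q (m:ℤ) ((m - l : ℕ):ℤ) * (-1:RatFunc ℚ) ^ (m - l) := by
    rw [hh, ← Finset.sum_range_reflect]
    apply Finset.sum_congr rfl
    intro l hl
    have : m + 1 - 1 - l = m - l := by omega
    rw [this]
  have e1 : ∀ l ∈ Finset.range (m + 1),
      qb q (m:ℤ) ((m - l : ℕ):ℤ) * (-1:RatFunc ℚ) ^ (m - l)
        = -(qb q (m:ℤ) (l:ℤ) * (-1:RatFunc ℚ) ^ l) := by
    intro l hl
    have hlm : l ≤ m := Nat.lt_succ_iff.mp (Finset.mem_range.mp hl)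
    rw [← qb_symm q q_pow_ne_one m l hlm]
    have hsplit : (-1:RatFunc ℚ) ^ (m - l) * (-1:RatFunc ℚ) ^ l = (-1:RatFunc ℚ) ^ m := by
      rw [← pow_add, Nat.sub_add_cancel hlm]
    have hml : (-1:RatFunc ℚ) ^ m = -1 := by
      rw [hm, pow_add, pow_mul]
      simp
    have hl2 : ((-1:RatFunc ℚ) ^ l) * ((-1:RatFunc ℚ) ^ l) = 1 := by
      rw [← pow_add, ← two_mul, pow_mul]
      simp
    have : (-1:RatFunc ℚ) ^ (m - l) = -(-1:RatFunc ℚ) ^ l := by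
      have := hsplit
      rw [hml] at this
      calc (-1:RatFunc ℚ) ^ (m - l) = (-1:RatFunc ℚ) ^ (m-l) * (((-1:RatFunc ℚ)^l) * ((-1:RatFunc ℚ)^l)) := by rw [hl2]; ring
        _ = ((-1:RatFunc ℚ) ^ (m-l) * ((-1:RatFunc ℚ)^l)) * ((-1:RatFunc ℚ)^l) := by ring
        _ = -(-1:RatFunc ℚ) ^ l := by rw [this]; ring
    rw [this]
    ring
  have : hh m (-1) = - hh m (-1) := by
    calc hh m (-1) = ∑ l ∈ Finset.range (m + 1), qb q (m:ℤ) ((m - l : ℕ):ℤ) * (-1:RatFunc ℚ) ^ (m - l) := hrefl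
      _ = ∑ l ∈ Finset.range (m + 1), -(qb q (m:ℤ) (l:ℤ) * (-1:RatFunc ℚ) ^ l) := Finset.sum_congr rfl e1
      _ = - hh m (-1) := by rw [Finset.sum_neg_distrib, hh]
  have h2 : (2 : RatFunc ℚ) * hh m (-1) = 0 := by linear_combination this
  haveI : CharZero (RatFunc ℚ) := algebraRat.charZero _
  have h3 : (2 : RatFunc ℚ) ≠ 0 := two_ne_zero
  exact (mul_eq_zero.mp h2).resolve_left h3

lemma hh_even (s : ℕ) : hh (2 * s) (-1) = ∏ i ∈ Finset.range s, (1 - q ^ (2 * i + 1)) := by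
  induction s with
  | zero =>
    simp [hh, qb_zero_col]
  | succ s ih =>
    have h1 : hh (2 * (s+1)) (-1) = hh (2*s+1) (q * (-1)) := by
      rw [show 2 * (s+1) = (2*s+1)+1 by omega, hh_R1]
      rw [show 2*s+1 = 2*s+1 from rfl, hh_odd s]
      ring
    rw [h1, show 2*s+1 = (2*s)+1 from rfl, hh_Cx, hh_odd s, ih]
    rw [Finset.prod_range_succ]
    ring

lemma hh_neg_q (n : ℕ) (hn : 1 ≤ n) :
    hh (2 * n - 1) (-q) = ∏ i ∈ Finset.range n, (1 - q ^ (2 * i + 1)) := by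
  obtain ⟨s, rfl⟩ : ∃ s, n = s + 1 := ⟨n - 1, by omega⟩
  rw [show 2 * (s+1) - 1 = (2*s) + 1 by omega]
  have h1 : hh (2*s+1) (q * (-1)) = hh (2*s+1) (-1) - (-1) * (1 - q^(2*s+1)) * hh (2*s) (-1) := hh_Cx (2*s) (-1)
  rw [show (-q) = q * (-1) by ring, h1, hh_odd s, hh_even s, Finset.prod_range_succ]
  ring

-- the k-recurrence for hh m (-q^k)
lemma hh_rec (m k : ℕ) :
    hh m (-q ^ (k+2)) = (1 + q^(k+1)) * hh m (-q^(k+1)) - q^(m+1+k) * hh m (-q^k) := by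
  rw [hh, hh, hh]
  rw [← sub_eq_zero]
  have expand : ∀ l ∈ Finset.range (m+1),
      qb q (m:ℤ) (l:ℤ) * (-q^(k+2))^l - ((1 + q^(k+1)) * (qb q (m:ℤ) (l:ℤ) * (-q^(k+1))^l) - q^(m+1+k) * (qb q (m:ℤ) (l:ℤ) * (-q^k)^l))
        = (qb q (m:ℤ) (l:ℤ) * (-q^k)^l * q^l * (q^l - 1))
          + (qb q (m:ℤ) (l:ℤ) * (-q^k)^l * q^(k+1) * (q^m - q^l)) := by
    intro l _
    have e2 : (-q^(k+2) : RatFunc ℚ)^l = (-q^k)^l * (q^l)^2 := by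
      rw [show (-q^(k+2) : RatFunc ℚ) = (-q^k) * q^2 by ring, mul_pow, ← pow_mul, ← pow_mul]
      ring
    have e1 : (-q^(k+1) : RatFunc ℚ)^l = (-q^k)^l * q^l := by
      rw [show (-q^(k+1) : RatFunc ℚ) = (-q^k) * q by ring, mul_pow]
    rw [e1, e2, show m+1+k = k+1+m by omega, pow_add]
    ring
  rw [Finset.mul_sum, Finset.mul_sum, ← Finset.sum_sub_distrib, ← Finset.sum_sub_distrib,
    Finset.sum_congr rfl expand, Finset.sum_add_distrib]
  -- first sum: term l=0 vanishes; second sum: term l=m vanishes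
  set A : ℕ → RatFunc ℚ := fun l => qb q (m:ℤ) (l:ℤ) * (-q^k)^l * q^l * (q^l - 1) with hA
  set B : ℕ → RatFunc ℚ := fun l => qb q (m:ℤ) (l:ℤ) * (-q^k)^l * q^(k+1) * (q^m - q^l) with hB
  have sA : ∑ l ∈ Finset.range (m+1), A l = ∑ l ∈ Finset.range m, A (l+1) := by
    rw [Finset.sum_range_succ']
    have : A 0 = 0 := by simp [hA]
    rw [this, add_zero]
  have sB : ∑ l ∈ Finset.range (m+1), B l = ∑ l ∈ Finset.range m, B l := by
    rw [Finset.sum_range_succ]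
    have : B m = 0 := by simp [hB]
    rw [this, add_zero]
  rw [sA, sB, ← Finset.sum_add_distrib]
  apply Finset.sum_eq_zero
  intro l hl
  have hlm : l < m := Finset.mem_range.mp hl
  -- absorption: (1 - q^(l+1)) [m, l+1] = (1 - q^(m-l)) [m, l]
  obtain ⟨e, hme⟩ : ∃ e, m = l + 1 + e := ⟨m - (l+1), by omega⟩
  have habs := qb_absorb q q_pow_ne_one l e
  rw [← hme] at habs
  -- A (l+1) + B l = 0
  have eA : A (l+1) = qb q (m:ℤ) ((l+1:ℕ):ℤ) * (-q^k)^(l+1) * q^(l+1) * (q^(l+1) - 1) := rfl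
  have eB : B l = qb q (m:ℤ) (l:ℤ) * (-q^k)^l * q^(k+1) * (q^m - q^l) := rfl
  rw [eA, eB]
  have hpow : (-q^k : RatFunc ℚ)^(l+1) = (-q^k) * (-q^k)^l := by ring
  have hqm : (q : RatFunc ℚ)^m = q^(e+1) * q^l := by rw [hme, ← pow_add]; ring_nf
  rw [hpow, hqm]
  push_cast at habs ⊢
  linear_combination ((-q^k)^l * q^(k+1) * q^l) * habs

lemma FF_eq_hh (n k : ℕ) (hn : 1 ≤ n) :
    (∑ l ∈ Finset.range (2 * n), qb q (2 * (n:ℤ) - 1) (l:ℤ) * (-q ^ k) ^ (2 * n - 1 - l))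
      = hh (2 * n - 1) (-q ^ k) := by
  set m := 2 * n - 1 with hm
  have h2n : 2 * n = m + 1 := by omega
  have hcast : (2 * (n:ℤ) - 1) = ((m : ℕ) : ℤ) := by omega
  rw [h2n, hcast]
  rw [hh, ← Finset.sum_range_reflect]
  apply Finset.sum_congr rfl
  intro l hl
  have hlm : l ≤ m := Nat.lt_succ_iff.mp (Finset.mem_range.mp hl)
  rw [show m + 1 - 1 - l = m - l by omega]
  rw [← qb_symm q q_pow_ne_one m l hlm, show m - (m - l) = l by omega]

noncomputable def PP (s : ℕ) : RatFunc ℚ := ∏ i ∈ Finset.range s, (1 + q ^ (i + 1))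

lemma pp_succ (s : ℕ) : PP (s + 1) = PP s * (1 + q ^ (s + 1)) := by
  simp [PP, Finset.prod_range_succ]

lemma star_a (i d : ℕ) :
    qb (q^2) ((i+d+3:ℕ):ℤ) ((i+1:ℕ):ℤ) * PP (d+2)
      - (1 + q^(2*i+d+4)) * qb (q^2) ((i+d+2:ℕ):ℤ) ((i+1:ℕ):ℤ) * PP (d+1)
      = q^(d+2) * qb (q^2) ((i+d+2:ℕ):ℤ) ((i:ℕ):ℤ) * PP (d+2) := by
  rw [qb_eq (q^2) good_q2 _ _ (by omega), qb_eq (q^2) good_q2 _ _ (by omega),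
    qb_eq (q^2) good_q2 _ _ (by omega)]
  rw [show i+d+3 - (i+1) = d+2 by omega, show i+d+2 - (i+1) = d+1 by omega,
    show i+d+2 - i = d+2 by omega]
  rw [show i+d+3 = (i+d+2)+1 by omega, fac_succ (q^2) (i+d+2),
    show i+d+2 = (i+d+2) from rfl]
  rw [show (i:ℕ)+1 = i+1 from rfl, fac_succ (q^2) i]
  rw [show d+2 = (d+1)+1 by omega, fac_succ (q^2) (d+1), pp_succ (d+1)]
  rw [show d+1+1 = d+2 by omega]
  have h1 := fac_ne (q^2) good_q2 i
  have h2 := fac_ne (q^2) good_q2 (d+1)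
  have h3 := fac_ne (q^2) good_q2 (i+d+2)
  have h4 := good_sub_ne (q^2) good_q2 i
  have h5 := good_sub_ne (q^2) good_q2 (d+1)
  have h6 := good_sub_ne (q^2) good_q2 (i+d+2)
  field_simp
  ring

lemma star_b (i : ℕ) :
    qb (q^2) ((i+2:ℕ):ℤ) ((i+1:ℕ):ℤ) * PP 1 - (1 + q^(2*i+3))
      = q * qb (q^2) ((i+1:ℕ):ℤ) ((i:ℕ):ℤ) * PP 1 := by
  rw [qb_eq (q^2) good_q2 _ _ (by omega), qb_eq (q^2) good_q2 _ _ (by omega)]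
  rw [show i+2 - (i+1) = 1 by omega, show i+1 - i = 1 by omega]
  rw [show i+2 = (i+1)+1 by omega, fac_succ (q^2) (i+1), fac_succ (q^2) i]
  have hP1 : PP 1 = 1 + q := by simp [PP]
  have hF1 : Fac (q^2) 1 = 1 - q^2 := by simp [Fac]
  rw [hP1, hF1]
  have h1 := fac_ne (q^2) good_q2 i
  have h4 := good_sub_ne (q^2) good_q2 i
  have h5 : (1 : RatFunc ℚ) - (q^2)^(i+1+1) ≠ 0 := good_sub_ne (q^2) good_q2 (i+1)
  have h6 : (1 : RatFunc ℚ) - q^2 ≠ 0 := by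
    have := good_sub_ne (q^2) good_q2 0
    simpa using this
  field_simp
  ring

noncomputable def gterm (n k j : ℕ) : RatFunc ℚ :=
  (-1 : RatFunc ℚ) ^ j * q ^ (j ^ 2) * q ^ (2 * j * n)
    * qb (q ^ 2) ((k : ℤ) - j - 1) j * ∏ i ∈ Finset.range (k - 1 - 2 * j), (1 + q ^ (i + 1))

lemma gterm_eq (n k j : ℕ) : gterm n k j
    = (-1 : RatFunc ℚ) ^ j * q ^ (j ^ 2) * q ^ (2 * j * n)
      * qb (q ^ 2) ((k : ℤ) - j - 1) j * PP (k - 1 - 2 * j) := rfl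

lemma gterm_zero (n k j : ℕ) (h : k ≤ 2 * j) : gterm n k j = 0 := by
  rw [gterm_eq, qb_zero_of_lt (q^2) _ _ (by omega)]
  ring

noncomputable def Wf (n k : ℕ) : ℕ → RatFunc ℚ
  | 0 => 0
  | (j+1) => (-1 : RatFunc ℚ) ^ (j+1) * q ^ ((j+1) ^ 2) * q ^ (2 * (j+1) * n)
      * q ^ (k - 1 - 2*j) * qb (q ^ 2) ((k : ℤ) - (j+1)) (j : ℤ) * PP (k - 1 - 2 * j)

lemma Wf_zero_of (n k j : ℕ) (h : k + 2 ≤ 2 * (j+1)) : Wf n k (j+1) = 0 := by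
  rw [Wf, qb_zero_of_lt (q^2) _ _ (by omega)]
  ring

lemma col1 (t : RatFunc ℚ) (κ : ℕ) (h : 1 ≤ κ) :
    qb t ((κ:ℤ) - ((0:ℕ):ℤ) - 1) (((0:ℕ)):ℤ) = 1 := by
  rw [show ((κ:ℤ) - ((0:ℕ):ℤ) - 1) = ((κ:ℤ) - 1) by push_cast; ring,
    show (((0:ℕ):ℤ)) = 0 by simp]
  exact qb_zero_col t _ (by omega)

lemma col2 (t : RatFunc ℚ) (κ : ℕ) (h : 1 ≤ κ) :
    qb t ((κ:ℤ) - (((0:ℕ):ℤ) + 1)) (((0:ℕ)):ℤ) = 1 := by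
  rw [show ((κ:ℤ) - (((0:ℕ):ℤ) + 1)) = ((κ:ℤ) - 1) by push_cast; ring,
    show (((0:ℕ):ℤ)) = 0 by simp]
  exact qb_zero_col t _ (by omega)

lemma pp_zero : PP 0 = 1 := by simp [PP]

-- the per-j telescoping identity, for k ≥ 1
lemma perj (n k j : ℕ) (hk : 1 ≤ k) :
    gterm n (k+2) j - (1 + q^(k+1)) * gterm n (k+1) j + q^(2*n+k) * gterm n k j
      = Wf n k j - Wf n k (j+1) := by
  match j with
  | 0 =>
    obtain ⟨k', rfl⟩ : ∃ k', k = k' + 1 := ⟨k - 1, by omega⟩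
    rw [gterm_eq, gterm_eq, gterm_eq, Wf, Wf]
    rw [col1 (q^2) (k'+1+2) (by omega), col1 (q^2) (k'+1+1) (by omega),
      col1 (q^2) (k'+1) (by omega), col2 (q^2) (k'+1) (by omega)]
    rw [show k'+1+2-1-2*0 = k'+2 by omega, show k'+1+1-1-2*0 = k'+1 by omega,
      show k'+1-1-2*0 = k' by omega]
    rw [pp_succ (k'+1), pp_succ k']
    ring
  | (i+1) =>
    rcases Nat.lt_or_ge (2*(i+1)+1) (k+1) with hca | hc1
    · -- case (a): 2j+1 ≤ k
      obtain ⟨d, rfl⟩ : ∃ d, k = 2*i+d+3 := ⟨k - (2*i+3), by omega⟩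
      rw [gterm_eq, gterm_eq, gterm_eq, Wf, Wf]
      rw [show ((2*i+d+3+2:ℕ):ℤ)-((i+1:ℕ):ℤ)-1 = ((i+d+3:ℕ):ℤ) by push_cast; ring,
        show ((2*i+d+3+1:ℕ):ℤ)-((i+1:ℕ):ℤ)-1 = ((i+d+2:ℕ):ℤ) by push_cast; ring,
        show ((2*i+d+3:ℕ):ℤ)-((i+1:ℕ):ℤ)-1 = ((i+d+1:ℕ):ℤ) by push_cast; ring,
        show ((2*i+d+3:ℕ):ℤ)-(((i:ℕ):ℤ)+1) = ((i+d+2:ℕ):ℤ) by push_cast; ring,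
        show ((2*i+d+3:ℕ):ℤ)-(((i+1:ℕ):ℤ)+1) = ((i+d+1:ℕ):ℤ) by push_cast; ring]
      rw [show 2*i+d+3+2-1-2*(i+1) = d+2 by omega, show 2*i+d+3+1-1-2*(i+1) = d+1 by omega,
        show 2*i+d+3-1-2*(i+1) = d by omega, show 2*i+d+3-1-2*i = d+2 by omega]
      have hst := star_a i d
      rw [show 2*i+d+3+1 = 2*i+d+4 by omega]
      linear_combination ((-1:RatFunc ℚ)^(i+1) * q^((i+1)^2) * q^(2*(i+1)*n)) * hst
    · rcases Nat.lt_or_ge k (2*(i+1)-1) with hcd | hc2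
      · -- case (d): k ≤ 2j-2, everything 0
        rw [gterm_zero n (k+2) (i+1) (by omega), gterm_zero n (k+1) (i+1) (by omega),
          gterm_zero n k (i+1) (by omega), Wf_zero_of n k (i+1) (by omega)]
        rw [Wf, qb_zero_of_lt (q^2) _ _ (by omega)]
        ring
      · rcases Nat.lt_or_ge k (2*(i+1)) with hcc | hcb
        · -- case (c): k = 2j-1 = 2i+1
          have hk2 : k = 2*i+1 := by omega
          subst hk2
          rw [gterm_eq, gterm_zero n (2*i+1+1) (i+1) (by omega),
            gterm_zero n (2*i+1) (i+1) (by omega), Wf, Wf_zero_of n (2*i+1) (i+1) (by omega)]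
          rw [show ((2*i+1+2:ℕ):ℤ)-((i+1:ℕ):ℤ)-1 = ((i+1:ℕ):ℤ) by push_cast; ring,
            show ((2*i+1:ℕ):ℤ)-(((i:ℕ):ℤ)+1) = ((i:ℕ):ℤ) by push_cast; ring]
          rw [qb_self (q^2) good_q2 (i+1), qb_self (q^2) good_q2 i]
          rw [show 2*i+1+2-1-2*(i+1) = 0 by omega, show 2*i+1-1-2*i = 0 by omega, pp_zero]
          ring
        · -- case (b): k = 2j = 2i+2
          have hk2 : k = 2*i+2 := by omega
          subst hk2
          rw [gterm_eq, gterm_eq, gterm_zero n (2*i+2) (i+1) (by omega),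
            Wf, Wf_zero_of n (2*i+2) (i+1) (by omega)]
          rw [show ((2*i+2+2:ℕ):ℤ)-((i+1:ℕ):ℤ)-1 = ((i+2:ℕ):ℤ) by push_cast; ring,
            show ((2*i+2+1:ℕ):ℤ)-((i+1:ℕ):ℤ)-1 = ((i+1:ℕ):ℤ) by push_cast; ring,
            show ((2*i+2:ℕ):ℤ)-(((i:ℕ):ℤ)+1) = ((i+1:ℕ):ℤ) by push_cast; ring]
          rw [qb_self (q^2) good_q2 (i+1)]
          rw [show 2*i+2+2-1-2*(i+1) = 1 by omega, show 2*i+2+1-1-2*(i+1) = 0 by omega,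
            show 2*i+2-1-2*i = 1 by omega, pp_zero]
          have hst := star_b i
          rw [show (2*i+2)+1 = 2*i+3 by omega]
          linear_combination ((-1:RatFunc ℚ)^(i+1) * q^((i+1)^2) * q^(2*(i+1)*n)) * hst

noncomputable def G (n k : ℕ) : RatFunc ℚ := ∑ j ∈ Finset.range ((k-1)/2+1), gterm n k j

lemma G_ext (n κ R : ℕ) (hR : (κ-1)/2+1 ≤ R) :
    G n κ = ∑ j ∈ Finset.range R, gterm n κ j := by
  rw [G]
  apply Finset.sum_subset (Finset.range_subset_range.mpr hR)
  intro j _ hj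
  have : (κ-1)/2+1 ≤ j := by
    by_contra hcon
    exact hj (Finset.mem_range.mpr (by omega))
  exact gterm_zero n κ j (by omega)

lemma G_rec (n k : ℕ) (hk : 1 ≤ k) :
    G n (k+2) = (1 + q^(k+1)) * G n (k+1) - q^(2*n+k) * G n k := by
  set R := (k+1)/2+2 with hR
  rw [G_ext n (k+2) R (by omega), G_ext n (k+1) R (by omega), G_ext n k R (by omega)]
  have tele : ∑ j ∈ Finset.range R, (Wf n k j - Wf n k (j+1)) = Wf n k 0 - Wf n k R :=
    Finset.sum_range_sub' (Wf n k) R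
  have hW0 : Wf n k 0 = 0 := rfl
  have hWR : Wf n k R = 0 := by
    rw [show R = ((k+1)/2+1)+1 by omega]
    exact Wf_zero_of n k ((k+1)/2+1) (by omega)
  have hsum : ∑ j ∈ Finset.range R,
      (gterm n (k+2) j - (1 + q^(k+1)) * gterm n (k+1) j + q^(2*n+k) * gterm n k j) = 0 := by
    rw [Finset.sum_congr rfl (fun j _ => perj n k j hk), tele, hW0, hWR, sub_zero]
  rw [Finset.sum_add_distrib, Finset.sum_sub_distrib, ← Finset.mul_sum, ← Finset.mul_sum] at hsum
  linear_combination hsum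

lemma G_val0 (n : ℕ) : G n 0 = 0 := by
  rw [G, show (0-1)/2+1 = 1 by omega]
  rw [Finset.sum_range_one, gterm_eq, qb_zero_of_lt (q^2) _ _ (by omega)]
  ring

lemma G_val1 (n : ℕ) : G n 1 = 1 := by
  rw [G, show (1-1)/2+1 = 1 by omega, Finset.sum_range_one, gterm_eq,
    col1 (q^2) 1 (by omega), show 1-1-2*0 = 0 by omega, pp_zero]
  ring

lemma G_val2 (n : ℕ) : G n 2 = 1 + q := by
  rw [G, show (2-1)/2+1 = 1 by omega, Finset.sum_range_one, gterm_eq,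
    col1 (q^2) 2 (by omega), show 2-1-2*0 = 1 by omega, pp_succ 0, pp_zero]
  ring

lemma D_ne (n : ℕ) : (∏ i ∈ Finset.range n, (1 - q ^ (2 * i + 1))) ≠ 0 := by
  apply Finset.prod_ne_zero_iff.mpr
  intro i _
  exact good_sub_ne q q_pow_ne_one (2*i)

lemma key (n : ℕ) (hn : 1 ≤ n) : ∀ k : ℕ,
    hh (2*n-1) (-q^k) = (∏ i ∈ Finset.range n, (1 - q ^ (2 * i + 1))) * G n k := by
  set D := ∏ i ∈ Finset.range n, (1 - q ^ (2 * i + 1)) with hD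
  have base0 : hh (2*n-1) (-q^0) = D * G n 0 := by
    rw [pow_zero, G_val0, mul_zero, show 2*n-1 = 2*(n-1)+1 by omega]
    exact hh_odd (n-1)
  have base1 : hh (2*n-1) (-q^1) = D * G n 1 := by
    rw [pow_one, G_val1, mul_one]
    exact hh_neg_q n hn
  have base2 : hh (2*n-1) (-q^2) = D * G n 2 := by
    have h := hh_rec (2*n-1) 0
    rw [show (2*n-1)+1+0 = 2*n by omega] at h
    rw [h, base0, base1, G_val0, G_val1, G_val2]
    ring
  have step : ∀ k : ℕ, 1 ≤ k →
      hh (2*n-1) (-q^k) = D * G n k → hh (2*n-1) (-q^(k+1)) = D * G n (k+1) →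
      hh (2*n-1) (-q^(k+2)) = D * G n (k+2) := by
    intro k hk ih0 ih1
    have h := hh_rec (2*n-1) k
    rw [show (2*n-1)+1+k = 2*n+k by omega] at h
    rw [h, ih0, ih1, G_rec n k hk]
    ring
  have main : ∀ k : ℕ, (hh (2*n-1) (-q^k) = D * G n k) ∧ (hh (2*n-1) (-q^(k+1)) = D * G n (k+1)) := by
    intro k
    induction k with
    | zero => exact ⟨base0, base1⟩
    | succ k ih =>
      refine ⟨ih.2, ?_⟩
      match k with
      | 0 => exact base2
      | (k'+1) => exact step (k'+1) (by omega) ih.1 ih.2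
  exact fun k => (main k).1

/-- Theorem 2, formula (2.14): for `n ≥ 1`,
`r_{2n-1}(1,-q^k) / r_{2n}(1,-1)
 = Σ_{j=0}^{⌊(k-1)/2⌋} (-1)^j q^(j²) q^(2jn) [k-j-1 choose j]_{q²} Π_{i=1}^{k-1-2j} (1+q^i)`. -/
theorem stmt_17 (n k : ℕ) (hn : 1 ≤ n) :
    (∑ l ∈ Finset.range (2 * n), qb q (2 * n - 1) l * (-q ^ k) ^ (2 * n - 1 - l))
        / ∏ i ∈ Finset.range n, (1 - q ^ (2 * i + 1))
      = ∑ j ∈ Finset.range ((k - 1) / 2 + 1),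
          (-1 : RatFunc ℚ) ^ j * q ^ (j ^ 2) * q ^ (2 * j * n)
            * qb (q ^ 2) ((k : ℤ) - j - 1) j
            * ∏ i ∈ Finset.range (k - 1 - 2 * j), (1 + q ^ (i + 1)) := by
  have h1 : (∑ l ∈ Finset.range (2 * n), qb q (2 * n - 1) l * (-q ^ k) ^ (2 * n - 1 - l))
      = hh (2 * n - 1) (-q ^ k) := FF_eq_hh n k hn
  have h2 : (∑ j ∈ Finset.range ((k - 1) / 2 + 1),
      (-1 : RatFunc ℚ) ^ j * q ^ (j ^ 2) * q ^ (2 * j * n)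
        * qb (q ^ 2) ((k : ℤ) - j - 1) j
        * ∏ i ∈ Finset.range (k - 1 - 2 * j), (1 + q ^ (i + 1))) = G n k := rfl
  rw [h1, h2, div_eq_iff (D_ne n), key n hn k]
  ring
end

section
/- For all natural numbers n ≥ 1 and k ≥ 1: r_{2n}(1,-q^k) / r_{2n}(1,-1) = Σ_{j=0}^{⌊k/2⌋} (-1)^j q^{j^2} q^{2jn} ((1-q^k)/(1-q^{2k-2j})) [k-j choose j]_{q^2} Π_{i=1}^{k-2j} (1+q^i), where r_m(x,a) = Σ_ℓ [m choose ℓ]_q x^ℓ a^{m-ℓ} and r_{2n}(1,-1) = Π_{i=1}^n (1-q^{2i-1}). -/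
open Finset

namespace Stmt18

abbrev K := RatFunc ℚ

lemma q_ne_zero : (q : K) ≠ 0 := RatFunc.X_ne_zero

lemma q_pow_ne_one {i : ℕ} (hi : 1 ≤ i) : (q : K) ^ i ≠ 1 := by
  have h : (q : K) ^ i - 1 = algebraMap (Polynomial ℚ) K (Polynomial.X ^ i - 1) := by
    simp [q, map_sub, map_pow, RatFunc.algebraMap_X]
  intro hcontra
  have h2 : (q : K) ^ i - 1 = 0 := by rw [hcontra]; ring
  rw [h] at h2
  have h3 : (Polynomial.X ^ i - 1 : Polynomial ℚ) = 0 :=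
    (map_eq_zero_iff _ (RatFunc.algebraMap_injective ℚ)).mp h2
  rw [sub_eq_zero] at h3
  have h5 := congrArg Polynomial.natDegree h3
  rw [Polynomial.natDegree_X_pow, Polynomial.natDegree_one] at h5
  omega

lemma q_pow_ne_neg_one {i : ℕ} (hi : 1 ≤ i) : (q : K) ^ i ≠ -1 := by
  have h : (q : K) ^ i + 1 = algebraMap (Polynomial ℚ) K (Polynomial.X ^ i + 1) := by
    simp [q, map_add, map_pow, RatFunc.algebraMap_X]
  intro hcontra
  have h2 : (q : K) ^ i + 1 = 0 := by rw [hcontra]; ring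
  rw [h] at h2
  have h3 : (Polynomial.X ^ i + 1 : Polynomial ℚ) = 0 :=
    (map_eq_zero_iff _ (RatFunc.algebraMap_injective ℚ)).mp h2
  have h3' : (Polynomial.X ^ i : Polynomial ℚ) = -1 := by linear_combination h3
  have h5 := congrArg Polynomial.natDegree h3'
  rw [Polynomial.natDegree_X_pow, Polynomial.natDegree_neg, Polynomial.natDegree_one] at h5
  omega

lemma one_sub_ne {i : ℕ} (hi : 1 ≤ i) : (1 : K) - q ^ i ≠ 0 := by
  intro h; exact q_pow_ne_one hi (by linear_combination -h)

lemma one_add_ne {i : ℕ} (hi : 1 ≤ i) : (1 : K) + q ^ i ≠ 0 := by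
  intro h; exact q_pow_ne_neg_one hi (by linear_combination h)

noncomputable def Np (t : K) (m l : ℕ) : K := ∏ i ∈ range l, (1 - t ^ (m - i))
noncomputable def Dp (t : K) (l : ℕ) : K := ∏ i ∈ range l, (1 - t ^ (i + 1))

/-- ℕ-indexed Gaussian binomial -/
noncomputable def B (t : K) (m l : ℕ) : K := if l ≤ m then Np t m l / Dp t l else 0

lemma qb_eq_B (t : K) (m l : ℕ) : qb t m l = B t m l := by
  unfold qb B Np Dp
  by_cases h : l ≤ m
  · rw [if_pos ⟨Int.ofNat_nonneg l, by exact_mod_cast h⟩, if_pos h]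
    rw [Int.toNat_natCast]
    congr 1
    apply Finset.prod_congr rfl
    intro i hi
    simp only [mem_range] at hi
    rw [show ((m : ℤ) - (i : ℤ)) = ((m - i : ℕ) : ℤ) by omega, zpow_natCast]
  · have h2 : ¬((0:ℤ) ≤ (l:ℤ) ∧ (l:ℤ) ≤ (m:ℤ)) := by push_cast; omega
    rw [if_neg h2, if_neg h]

lemma B_le {t : K} {m l : ℕ} (h : l ≤ m) : B t m l = Np t m l / Dp t l := if_pos h

lemma B_gt {t : K} {m l : ℕ} (h : m < l) : B t m l = 0 := if_neg (by omega)

lemma Dp_ne (l : ℕ) : Dp q l ≠ 0 :=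
  Finset.prod_ne_zero_iff.mpr fun i _ => one_sub_ne (by omega)

lemma B_zero_right (t : K) (m : ℕ) : B t m 0 = 1 := by
  rw [B_le (Nat.zero_le m)]; simp [Np, Dp]

lemma Np_peel_zero (m l : ℕ) : Np q (m + 1) (l + 1) = (1 - q ^ (m + 1)) * Np q m l := by
  unfold Np
  rw [Finset.prod_range_succ', Nat.sub_zero, mul_comm]
  congr 1
  exact Finset.prod_congr rfl fun i hi => by congr 2; omega

lemma Np_peel_top (m l : ℕ) : Np q m (l + 1) = Np q m l * (1 - q ^ (m - l)) := by
  unfold Np; rw [Finset.prod_range_succ]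

lemma Np_diag (m : ℕ) : Np q m m = Dp q m := by
  unfold Np Dp
  rw [← Finset.prod_range_reflect]
  refine Finset.prod_congr rfl fun i hi => ?_
  simp only [mem_range] at hi
  congr 2
  omega

lemma B_diag (m : ℕ) : B q m m = 1 := by
  rw [B_le le_rfl, Np_diag, div_self (Dp_ne m)]

lemma pascal (m l : ℕ) :
    B q (m + 1) (l + 1) = B q m (l + 1) + q ^ (m - l) * B q m l := by
  rcases lt_trichotomy l m with h | h | h
  · have h1 : l + 1 ≤ m + 1 := by omega
    have h2 : l + 1 ≤ m := by omega
    have h3 : l ≤ m := by omega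
    rw [B_le h1, B_le h2, B_le h3, Np_peel_zero, Np_peel_top]
    have hD : Dp q (l + 1) = Dp q l * (1 - q ^ (l + 1)) := by
      unfold Dp; rw [Finset.prod_range_succ]
    rw [hD]
    have hd1 : Dp q l ≠ 0 := Dp_ne l
    have hd2 : (1 : K) - q ^ (l + 1) ≠ 0 := one_sub_ne (by omega)
    have hml : (q : K) ^ (m - l) = q ^ (m + 1) / q ^ (l + 1) := by
      rw [eq_div_iff (pow_ne_zero _ q_ne_zero), ← pow_add]
      congr 1; omega
    rw [hml]
    have hq1 : (q : K) ^ (l + 1) ≠ 0 := pow_ne_zero _ q_ne_zero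
    field_simp
    ring
  · subst h
    rw [B_diag (l+1), B_gt (by omega : l < l + 1), B_diag l]
    simp
  · rw [B_gt (by omega : m + 1 < l + 1), B_gt (by omega : m < l + 1), B_gt h]
    ring

lemma absorb2 (m l : ℕ) :
    (1 - q ^ (m + 1 - l)) * B q (m + 1) l = (1 - q ^ (m + 1)) * B q m l := by
  rcases le_or_gt l m with h | h
  · rw [B_le (by omega : l ≤ m + 1), B_le h, ← mul_div_assoc, ← mul_div_assoc]
    congr 1
    have h1 : (1 - q ^ (m + 1 - l)) * Np q (m+1) l = Np q (m+1) (l+1) := by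
      rw [Np_peel_top]; ring
    rw [h1, Np_peel_zero]
  · rcases Nat.eq_or_lt_of_le h with h2 | h2
    · rw [← h2, B_gt (by omega : m < m + 1), show m + 1 - (m+1) = 0 by omega]
      simp
    · rw [B_gt (by omega : m + 1 < l), B_gt (by omega : m < l)]
      ring

/-- the Rogers–Szegő sum `r_m(1, a)` -/
noncomputable def Sa (a : K) (m : ℕ) : K :=
  ∑ l ∈ range (m + 1), B q m l * a ^ (m - l)

lemma Sa_zero (a : K) : Sa a 0 = 1 := by
  unfold Sa
  rw [Finset.sum_range_one, B_zero_right]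
  simp

lemma Sa_two (a : K) : Sa a 2 = 1 + (1 + q) * a + a ^ 2 := by
  unfold Sa
  rw [show (2:ℕ) + 1 = 3 from rfl]
  rw [Finset.sum_range_succ, Finset.sum_range_succ, Finset.sum_range_one]
  rw [B_zero_right, B_diag 2]
  have h1 : B q 2 1 = 1 + q := by
    rw [B_le (by omega : (1:ℕ) ≤ 2)]
    unfold Np Dp
    rw [Finset.prod_range_one, Finset.prod_range_one]
    rw [div_eq_iff (one_sub_ne (by omega : 1 ≤ 0 + 1))]
    ring
  rw [h1]
  norm_num
  ring

/-- Rogers–Szegő recurrence -/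
lemma Sa_rec (a : K) (m : ℕ) :
    Sa a (m + 2) = (1 + a) * Sa a (m + 1) - (1 - q ^ (m + 1)) * a * Sa a m := by
  have key1 : Sa a (m + 2) = a * Sa a (m + 1)
      + ∑ l ∈ range (m + 2), q ^ (m + 1 - l) * B q (m+1) l * a ^ (m + 1 - l) := by
    unfold Sa
    rw [Finset.sum_range_succ', B_zero_right]
    have step : ∀ l ∈ range (m + 2),
        B q (m+2) (l+1) * a ^ (m + 2 - (l+1))
          = B q (m+1) (l+1) * a ^ (m+1-l) + q ^ (m + 1 - l) * B q (m+1) l * a ^ (m + 1 - l) := by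
      intro l hl
      have hp := pascal (m+1) l
      rw [show m + 1 + 1 = m + 2 by ring] at hp
      rw [show m + 2 - (l + 1) = m + 1 - l by omega, hp]
      ring
    rw [Finset.sum_congr rfl step, Finset.sum_add_distrib]
    have first : a * ∑ l ∈ range (m + 1 + 1), B q (m+1) l * a ^ (m + 1 - l)
        = ∑ l ∈ range (m + 2), B q (m+1) (l+1) * a ^ (m + 1 - l) + 1 * a ^ (m + 2 - 0) := by
      rw [Finset.mul_sum]
      conv_lhs => rw [Finset.sum_range_succ']
      rw [B_zero_right]
      have e1 : ∀ l ∈ range (m+1), a * (B q (m+1) (l+1) * a ^ (m + 1 - (l+1)))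
          = B q (m+1) (l+1) * a ^ (m + 1 - l) := by
        intro l hl
        simp only [mem_range] at hl
        rw [show m + 1 - l = (m + 1 - (l + 1)) + 1 by omega, pow_succ]
        ring
      rw [Finset.sum_congr rfl e1]
      conv_rhs => rw [Finset.sum_range_succ]
      rw [B_gt (by omega : m + 1 < m + 1 + 1)]
      have e2 : a * (1 * a ^ (m + 1 - 0)) = 1 * a ^ (m + 2 - 0) := by
        rw [show m + 2 - 0 = (m + 1 - 0) + 1 by omega, pow_succ]; ring
      rw [← e2]
      ring
    linear_combination -first
  have key2 : ∑ l ∈ range (m + 2), q ^ (m + 1 - l) * B q (m+1) l * a ^ (m + 1 - l)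
      = Sa a (m + 1) - (1 - q ^ (m + 1)) * a * Sa a m := by
    have step : ∀ l ∈ range (m + 2),
        q ^ (m + 1 - l) * B q (m+1) l * a ^ (m + 1 - l)
          = B q (m+1) l * a ^ (m+1-l) - ((1 - q ^ (m+1)) * B q m l) * a ^ (m + 1 - l) := by
      intro l hl
      have hab := absorb2 m l
      linear_combination (-(a ^ (m + 1 - l))) * hab
    rw [Finset.sum_congr rfl step, Finset.sum_sub_distrib]
    unfold Sa
    congr 1
    rw [Finset.sum_range_succ, B_gt (by omega : m < m + 1)]
    have e1 : ∀ l ∈ range (m+1), (1 - q ^ (m+1)) * B q m l * a ^ (m + 1 - l)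
        = (1 - q ^ (m + 1)) * a * (B q m l * a ^ (m - l)) := by
      intro l hl
      simp only [mem_range] at hl
      rw [show m + 1 - l = (m - l) + 1 by omega, pow_succ]
      ring
    rw [Finset.sum_congr rfl e1]
    simp [Finset.mul_sum]
  rw [key1, key2]
  ring

/-- even-index recurrence -/
lemma Sa_even_rec (a : K) (n : ℕ) :
    Sa a (2*n + 4) = ((1 + a)^2 - (1 - q^(2*n+3)) * a - (1 - q^(2*n+2)) * a) * Sa a (2*n+2)
      - (1 - q^(2*n+2)) * (1 - q^(2*n+1)) * a^2 * Sa a (2*n) := by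
  have h1 := Sa_rec a (2*n+2)
  have h2 := Sa_rec a (2*n+1)
  have h3 := Sa_rec a (2*n)
  rw [show 2*n+2+2 = 2*n+4 by ring, show 2*n+2+1 = 2*n+3 by ring] at h1
  rw [show 2*n+1+2 = 2*n+3 by ring, show 2*n+1+1 = 2*n+2 by ring] at h2
  linear_combination h1 + (1 + a) * h2 + (1 - q^(2*n+2)) * a * h3

noncomputable def PP (m : ℕ) : K := ∏ i ∈ range m, (1 + q ^ (i + 1))
noncomputable def NN (k j : ℕ) : K := ∏ i ∈ range j, (1 - q ^ (2 * (k - j - i)))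
noncomputable def DD (j : ℕ) : K := ∏ i ∈ range j, (1 - q ^ (2 * i + 2))

/-- coefficient of the RHS -/
noncomputable def cc (k j : ℕ) : K :=
  (-1 : K) ^ j * q ^ (j ^ 2) * ((1 - q ^ k) / (1 - q ^ (2 * k - 2 * j)))
    * qb (q ^ 2) ((k : ℤ) - j) j * PP (k - 2 * j)

lemma PP_ne (m : ℕ) : PP m ≠ 0 :=
  Finset.prod_ne_zero_iff.mpr fun i _ => one_add_ne (by omega)

lemma DD_ne (j : ℕ) : DD j ≠ 0 :=
  Finset.prod_ne_zero_iff.mpr fun i _ => one_sub_ne (by omega)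

lemma Np_sq (m l : ℕ) : Np (q^2) m l = ∏ i ∈ range l, (1 - q ^ (2 * (m - i))) := by
  unfold Np
  exact Finset.prod_congr rfl fun i _ => by rw [pow_mul]

lemma Dp_sq (l : ℕ) : Dp (q^2) l = DD l := by
  unfold Dp DD
  exact Finset.prod_congr rfl fun i _ => by rw [show 2*i+2 = 2*(i+1) by ring, pow_mul]

lemma B_sq (k j : ℕ) (h : 2 * j ≤ k) : B (q^2) (k - j) j = NN k j / DD j := by
  rw [B_le (by omega : j ≤ k - j), Np_sq, Dp_sq]
  rfl

lemma cc_eq (k j : ℕ) (h : 2 * j ≤ k) :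
    cc k j = (-1 : K) ^ j * q ^ (j ^ 2) * ((1 - q ^ k) / (1 - q ^ (2 * k - 2 * j)))
      * (NN k j / DD j) * PP (k - 2 * j) := by
  unfold cc
  rw [show ((k : ℤ) - (j:ℤ)) = ((k - j : ℕ) : ℤ) by omega, qb_eq_B, B_sq k j h]

lemma cc_zero {k j : ℕ} (h : k < 2 * j) : cc k j = 0 := by
  unfold cc
  have hz : qb (q^2) ((k : ℤ) - j) j = 0 := by
    unfold qb
    rw [if_neg (by push_cast; omega)]
  rw [hz]
  ring

lemma NN_reflect (k j : ℕ) (h : 2 * j ≤ k) :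
    NN k j = ∏ i ∈ range j, (1 - q ^ (2 * (k - 2 * j + 1 + i))) := by
  unfold NN
  rw [← Finset.prod_range_reflect]
  exact Finset.prod_congr rfl fun i hi => by
    simp only [mem_range] at hi
    congr 2
    omega

lemma prod_shift2 (f : ℕ → K) (j : ℕ) :
    (∏ i ∈ range (j+1), f i) * f (j+1) = f 0 * f 1 * ∏ i ∈ range j, f (i+2) := by
  rw [← Finset.prod_range_succ f (j+1), Finset.prod_range_succ' f (j+1),
      Finset.prod_range_succ' (fun i => f (i+1)) j]
  ring

lemma DD_succ (j : ℕ) : DD (j+1) = DD j * (1 - q^(2*j+2)) := Finset.prod_range_succ _ _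

lemma PP_succ (m : ℕ) : PP (m+1) = PP m * (1 + q^(m+1)) := Finset.prod_range_succ _ _

/-- contiguous relation in `j` (C_j) -/
lemma Cjj (k j : ℕ) (h : 2 * (j + 1) ≤ k) :
    cc k (j+1) * (q^(4*j+4) - (1 + q^(2*k)) * q^(2*j+2) + q^(2*k))
      = cc k j * (q^(4*j+3) - q^k * (1+q) * q^(2*j+2) + q^(2*k) * q^2) := by
  obtain ⟨A, rfl⟩ : ∃ A, k = A + 2*j + 2 := ⟨k - (2*j+2), by omega⟩
  rw [cc_eq _ (j+1) h, cc_eq _ j (by omega)]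
  rw [show 2*(A+2*j+2) - 2*(j+1) = 2*A+2*j+2 by omega,
      show 2*(A+2*j+2) - 2*j = 2*A+2*j+4 by omega,
      show (A+2*j+2) - 2*(j+1) = A by omega,
      show (A+2*j+2) - 2*j = A+2 by omega]
  have eNN1 : NN (A+2*j+2) (j+1) = ∏ i ∈ range (j+1), (1 - q ^ (2*(A+1+i))) := by
    rw [NN_reflect _ _ h]
    exact Finset.prod_congr rfl fun i hi => by congr 2; omega
  have eNN0 : NN (A+2*j+2) j = ∏ i ∈ range j, (1 - q ^ (2*(A+1+(i+2)))) := by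
    rw [NN_reflect _ _ (by omega : 2*j ≤ A+2*j+2)]
    exact Finset.prod_congr rfl fun i hi => by congr 2; omega
  have eNN : NN (A+2*j+2) (j+1) * (1 - q ^ (2*(A+1+(j+1))))
      = (1 - q^(2*(A+1+0))) * (1 - q^(2*(A+1+1))) * NN (A+2*j+2) j := by
    rw [eNN1, eNN0]
    exact prod_shift2 (fun i => 1 - q ^ (2*(A+1+i))) j
  have hne : (1 : K) - q ^ (2*A+2*j+4) ≠ 0 := one_sub_ne (by omega)
  have eNNdiv : NN (A+2*j+2) (j+1)
      = (1 - q^(2*A+2)) * (1 - q^(2*A+4)) * NN (A+2*j+2) j / (1 - q^(2*A+2*j+4)) := by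
    rw [eq_div_iff hne]
    rw [show 2*A+2*j+4 = 2*(A+1+(j+1)) by ring] at hne ⊢
    rw [eNN]
    ring
  rw [eNNdiv, DD_succ]
  rw [show A + 2 = (A+1)+1 by ring, PP_succ, PP_succ]
  have h1 : (1 : K) - q ^ (2*A+2*j+2) ≠ 0 := one_sub_ne (by omega)
  have h2 : DD j ≠ 0 := DD_ne j
  have h3 : (1 : K) - q ^ (2*j+2) ≠ 0 := one_sub_ne (by omega)
  rw [pow_succ (-1 : K) j, show (j+1)^2 = j^2 + (2*j+1) by ring, pow_add]
  field_simp
  ring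

lemma NN_zero (k : ℕ) : NN k 0 = 1 := Finset.prod_range_zero _
lemma DD_zero : DD 0 = 1 := Finset.prod_range_zero _
lemma PP_zero : PP 0 = 1 := Finset.prod_range_zero _

lemma cc0 (k : ℕ) : cc (k+1) 0 = PP k := by
  rw [cc_eq (k+1) 0 (by omega)]
  rw [NN_zero, DD_zero]
  rw [show 2*(k+1) - 2*0 = 2*k+2 by omega, show (k+1) - 2*0 = k+1 by omega, PP_succ]
  have h1 : (1:K) - q^(2*k+2) ≠ 0 := one_sub_ne (by omega)
  have h2 : (1:K) - q^(k+1) ≠ 0 := one_sub_ne (by omega)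
  have h3 : (1:K) + q^(k+1) ≠ 0 := one_add_ne (by omega)
  have hfac : (1:K) - q^(2*k+2) = (1 - q^(k+1)) * (1 + q^(k+1)) := by
    rw [show 2*k+2 = (k+1) + (k+1) by ring, pow_add]
    ring
  rw [hfac]
  field_simp
  ring

lemma NN_diag (j : ℕ) : NN (2*j) j = DD j := by
  rw [NN_reflect _ _ (by omega)]
  unfold DD
  exact Finset.prod_congr rfl fun i hi => by congr 2; omega

lemma ccDiag (j : ℕ) : cc (2*(j+1)) (j+1) = (-1:K)^(j+1) * q^((j+1)^2) := by
  rw [cc_eq (2*(j+1)) (j+1) (by omega)]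
  rw [show 2*(2*(j+1)) - 2*(j+1) = 2*(j+1) by omega, show 2*(j+1) - 2*(j+1) = 0 by omega,
      PP_zero, show (2:ℕ)*(j+1) = 2*(j+1) by rfl, NN_diag]
  have h1 : (1:K) - q^(2*(j+1)) ≠ 0 := one_sub_ne (by omega)
  have h2 : DD (j+1) ≠ 0 := DD_ne (j+1)
  field_simp

/-- interior case of the k-recurrence -/
lemma ccRec_b (A j : ℕ) :
    cc (A+2*j+3) (j+1)
      = (1 + q^(A+2*j+2)) * cc (A+2*j+2) (j+1) - q^(A+2*j+2) * cc (A+2*j+1) j := by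
  rw [cc_eq (A+2*j+3) (j+1) (by omega), cc_eq (A+2*j+2) (j+1) (by omega),
      cc_eq (A+2*j+1) j (by omega)]
  rw [show 2*(A+2*j+3) - 2*(j+1) = 2*A+2*j+4 by omega,
      show 2*(A+2*j+2) - 2*(j+1) = 2*A+2*j+2 by omega,
      show 2*(A+2*j+1) - 2*j = 2*A+2*j+2 by omega,
      show (A+2*j+3) - 2*(j+1) = A+1 by omega,
      show (A+2*j+2) - 2*(j+1) = A by omega,
      show (A+2*j+1) - 2*j = A+1 by omega]
  have eN1 : NN (A+2*j+3) (j+1) = NN (A+2*j+1) j * (1 - q^(2*(A+1+(j+1)))) := by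
    rw [NN_reflect _ _ (by omega), NN_reflect _ _ (by omega)]
    rw [show (∏ i ∈ range (j+1), (1 - q ^ (2 * ((A+2*j+3) - 2*(j+1) + 1 + i))))
        = ∏ i ∈ range (j+1), (1 - q ^ (2 * (A+1+(i+1)))) from
      Finset.prod_congr rfl fun i hi => by congr 2; omega]
    rw [show (∏ i ∈ range j, (1 - q ^ (2 * ((A+2*j+1) - 2*j + 1 + i))))
        = ∏ i ∈ range j, (1 - q ^ (2 * (A+1+(i+1)))) from
      Finset.prod_congr rfl fun i hi => by congr 2; omega]
    exact Finset.prod_range_succ (fun i => 1 - q ^ (2 * (A+1+(i+1)))) j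
  have eN2 : NN (A+2*j+2) (j+1) = (1 - q^(2*A+2)) * NN (A+2*j+1) j := by
    rw [NN_reflect _ _ (by omega), NN_reflect _ _ (by omega)]
    rw [show (∏ i ∈ range (j+1), (1 - q ^ (2 * ((A+2*j+2) - 2*(j+1) + 1 + i))))
        = ∏ i ∈ range (j+1), (1 - q ^ (2 * (A+1+i))) from
      Finset.prod_congr rfl fun i hi => by congr 2; omega]
    rw [show (∏ i ∈ range j, (1 - q ^ (2 * ((A+2*j+1) - 2*j + 1 + i))))
        = ∏ i ∈ range j, (1 - q ^ (2 * (A+1+(i+1)))) from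
      Finset.prod_congr rfl fun i hi => by congr 2; omega]
    rw [Finset.prod_range_succ' (fun i => 1 - q ^ (2 * (A+1+i))) j]
    ring
  rw [eN1, eN2, DD_succ, PP_succ]
  have h1 : (1:K) - q^(2*A+2*j+4) ≠ 0 := one_sub_ne (by omega)
  have h2 : (1:K) - q^(2*A+2*j+2) ≠ 0 := one_sub_ne (by omega)
  have h3 : DD j ≠ 0 := DD_ne j
  have h4 : (1:K) - q^(2*j+2) ≠ 0 := one_sub_ne (by omega)
  rw [pow_succ (-1 : K) j, show (j+1)^2 = j^2 + (2*j+1) by ring, pow_add]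
  rw [show 2*(A+1+(j+1)) = 2*A+2*j+4 by ring]
  field_simp
  ring

/-- boundary case of the k-recurrence (2(j+2) = k) -/
lemma ccRec_c (j : ℕ) :
    cc (2*(j+2)) (j+2)
      = (1 + q^(2*j+3)) * cc (2*j+3) (j+2) - q^(2*j+3) * cc (2*(j+1)) (j+1) := by
  rw [cc_zero (show 2*j+3 < 2*(j+2) by omega)]
  rw [show 2*(j+2) = 2*((j+1)+1) by ring, ccDiag (j+1), ccDiag j]
  rw [show ((j+1)+1)^2 = (j+1)^2 + (2*j+3) by ring, pow_add]
  ring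

/-- the k-recurrence, unified -/
lemma ccRec (k j : ℕ) (hk3 : 3 ≤ k) (hj : 2*(j+1) ≤ k) :
    cc k (j+1) = (1 + q^(k-1)) * cc (k-1) (j+1) - q^(k-1) * cc (k-2) j := by
  rcases le_or_gt (2*(j+1)) (k-1) with h | h
  · obtain ⟨A, rfl⟩ : ∃ A, k = A+2*j+3 := ⟨k - (2*j+3), by omega⟩
    rw [show A+2*j+3-1 = A+2*j+2 by omega, show A+2*j+3-2 = A+2*j+1 by omega]
    exact ccRec_b A j
  · obtain ⟨i, rfl⟩ : ∃ i, j = i+1 := ⟨j - 1, by omega⟩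
    have hk : k = 2*(i+2) := by omega
    subst hk
    rw [show 2*(i+2)-1 = 2*i+3 by omega, show 2*(i+2)-2 = 2*(i+1) by omega]
    exact ccRec_c i

noncomputable def V (x : K) (k : ℕ) : K := ∑ j ∈ range (k/2 + 1), cc k j * x ^ j

lemma Vtop (x : K) (k : ℕ) : V x k = ∑ j ∈ range (k/2 + 2), cc k j * x ^ j := by
  unfold V
  rw [Finset.sum_range_succ (fun j => cc k j * x ^ j) (k/2+1)]
  rw [cc_zero (show k < 2*(k/2+1) by omega)]
  ring

lemma Vrec (x : K) (k : ℕ) (hk : 3 ≤ k) :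
    V x k = (1 + q^(k-1)) * V x (k-1) - q^(k-1) * x * V x (k-2) := by
  have hsplit : V x k = (∑ j ∈ range (k/2), cc k (j+1) * x^(j+1)) + cc k 0 * x^0 := by
    unfold V
    rw [Finset.sum_range_succ' (fun j => cc k j * x ^ j) (k/2)]
  have step : ∀ j ∈ range (k/2), cc k (j+1) * x^(j+1)
      = (1 + q^(k-1)) * (cc (k-1) (j+1) * x^(j+1)) - q^(k-1) * x * (cc (k-2) j * x^j) := by
    intro j hj
    simp only [mem_range] at hj
    rw [ccRec k j hk (by omega)]
    rw [pow_succ]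
    ring
  rw [hsplit, Finset.sum_congr rfl step, Finset.sum_sub_distrib]
  rw [← Finset.mul_sum, ← Finset.mul_sum]
  have e0 : cc k 0 * x^0 = (1 + q^(k-1)) * (cc (k-1) 0 * x^0) := by
    obtain ⟨m, rfl⟩ : ∃ m, k = m + 2 := ⟨k - 2, by omega⟩
    have c1 : cc (m+2) 0 = PP (m+1) := cc0 (m+1)
    have c2 : cc (m+1) 0 = PP m := cc0 m
    simp only [show m+2-1 = m+1 from rfl]
    rw [c1, c2, PP_succ]
    ring
  have eV2 : ∑ j ∈ range (k/2), cc (k-2) j * x^j = V x (k-2) := by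
    unfold V
    rw [show (k-2)/2 + 1 = k/2 by omega]
  have eV1 : (∑ j ∈ range (k/2), cc (k-1) (j+1) * x^(j+1)) + cc (k-1) 0 * x^0
      = V x (k-1) := by
    rw [← Finset.sum_range_succ' (fun j => cc (k-1) j * x^j) (k/2)]
    rcases Nat.even_or_odd k with he | ho
    · have hb : k/2 + 1 = (k-1)/2 + 2 := by obtain ⟨m, rfl⟩ := he; omega
      rw [hb, ← Vtop x (k-1)]
    · have hb : k/2 + 1 = (k-1)/2 + 1 := by obtain ⟨m, rfl⟩ := ho; omega
      rw [hb]
      rfl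
  rw [eV2]
  linear_combination e0 + (1 + q^(k-1)) * eV1

lemma V_one_one : V 1 1 = 1 := by
  unfold V
  rw [show (1:ℕ)/2 + 1 = 1 by norm_num, Finset.sum_range_one]
  rw [show (1:ℕ) = 0 + 1 by rfl, cc0 0, PP_zero]
  norm_num

lemma cc21 : cc 2 1 = -q := by
  have h := ccDiag 0
  norm_num at h
  rw [h]

lemma V_one_two : V 1 2 = 1 := by
  unfold V
  rw [show (2:ℕ)/2 + 1 = 2 by norm_num, Finset.sum_range_succ, Finset.sum_range_one]
  rw [show (2:ℕ) = 1 + 1 by rfl, cc0 1, PP_succ, PP_zero]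
  rw [show (1:ℕ)+1 = 2 by rfl, cc21]
  ring

lemma V_q2_one : V (q^2) 1 = 1 := by
  unfold V
  rw [show (1:ℕ)/2 + 1 = 1 by norm_num, Finset.sum_range_one]
  rw [show (1:ℕ) = 0 + 1 by rfl, cc0 0, PP_zero]
  ring

lemma V_q2_two : V (q^2) 2 = 1 + q - q^3 := by
  unfold V
  rw [show (2:ℕ)/2 + 1 = 2 by norm_num, Finset.sum_range_succ, Finset.sum_range_one]
  rw [show (2:ℕ) = 1 + 1 by rfl, cc0 1, PP_succ, PP_zero]
  rw [show (1:ℕ)+1 = 2 by rfl, cc21]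
  ring

lemma Wone : ∀ k, 1 ≤ k → V 1 k = 1 := by
  intro k
  induction k using Nat.strong_induction_on with
  | _ k ih =>
    intro hk
    match k, hk with
    | 1, _ => exact V_one_one
    | 2, _ => exact V_one_two
    | (m+3), _ =>
      rw [Vrec 1 (m+3) (by omega), show m+3-1 = m+2 by omega, show m+3-2 = m+1 by omega]
      rw [ih (m+2) (by omega) (by omega), ih (m+1) (by omega) (by omega)]
      ring

lemma Wq2 : ∀ k, 1 ≤ k → (1 - q) * V (q^2) k = 1 - q^k - q^(k+1) + q^(2*k) := by
  intro k
  induction k using Nat.strong_induction_on with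
  | _ k ih =>
    intro hk
    match k, hk with
    | 1, _ => rw [V_q2_one]; ring
    | 2, _ => rw [V_q2_two]; ring
    | (m+3), _ =>
      rw [Vrec (q^2) (m+3) (by omega), show m+3-1 = m+2 by omega, show m+3-2 = m+1 by omega]
      have h1 := ih (m+2) (by omega) (by omega)
      have h2 := ih (m+1) (by omega) (by omega)
      linear_combination (1 + q^(m+2)) * h1 - q^(m+2) * q^2 * h2

noncomputable def Ej (k j : ℕ) : K := q^(4*j) - (1 + q^(2*k)) * q^(2*j) + q^(2*k)
noncomputable def Fj (k j : ℕ) : K := q^(4*j+3) - q^k * (1+q) * q^(2*j+2) + q^(2*k) * q^2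

lemma Ftop (k : ℕ) : Fj k (k/2) = 0 := by
  unfold Fj
  rcases Nat.even_or_odd k with he | ho
  · obtain ⟨d, rfl⟩ := he
    rw [show (d+d)/2 = d by omega, show (d+d) = 2*d by ring]
    ring
  · obtain ⟨d, rfl⟩ := ho
    rw [show (2*d+1)/2 = d by omega]
    ring

lemma KEY (k n : ℕ) :
    ∑ j ∈ range (k/2+1), cc k j * q^(2*j*n) * Ej k j
      = ∑ j ∈ range (k/2+1), cc k j * q^(2*(j+1)*n) * Fj k j := by
  rw [Finset.sum_range_succ' (fun j => cc k j * q^(2*j*n) * Ej k j) (k/2)]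
  rw [Finset.sum_range_succ (fun j => cc k j * q^(2*(j+1)*n) * Fj k j) (k/2)]
  rw [Ftop k]
  have hE0 : Ej k 0 = 0 := by unfold Ej; ring
  rw [hE0]
  have step : ∀ j ∈ range (k/2), cc k (j+1) * q^(2*(j+1)*n) * Ej k (j+1)
      = cc k j * q^(2*(j+1)*n) * Fj k j := by
    intro j hj
    simp only [mem_range] at hj
    have hc := Cjj k j (by omega)
    have hE : Ej k (j+1) = q^(4*j+4) - (1 + q^(2*k)) * q^(2*j+2) + q^(2*k) := by
      unfold Ej; ring
    have hF : Fj k j = q^(4*j+3) - q^k * (1+q) * q^(2*j+2) + q^(2*k) * q^2 := rfl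
    rw [hE, hF]
    linear_combination q^(2*(j+1)*n) * hc
  rw [Finset.sum_congr rfl step]
  ring

lemma Rrec (k n : ℕ) :
    (1 - q^(2*n+3)) * V (q^(2*(n+2))) k
      = ((1 + (-q^k))^2 - (1 - q^(2*n+3)) * (-q^k) - (1 - q^(2*n+2)) * (-q^k)) * V (q^(2*(n+1))) k
        - (1 - q^(2*n+2)) * (-q^k)^2 * V (q^(2*n)) k := by
  have key := KEY k n
  have key2 : ∑ j ∈ range (k/2+1),
      (cc k j * q^(2*j*n) * Ej k j - cc k j * q^(2*(j+1)*n) * Fj k j) = 0 := by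
    rw [Finset.sum_sub_distrib, key]
    ring
  have h1 : (1 - q^(2*n+3)) * V (q^(2*(n+2))) k
      - (((1 + (-q^k))^2 - (1 - q^(2*n+3)) * (-q^k) - (1 - q^(2*n+2)) * (-q^k)) * V (q^(2*(n+1))) k
        - (1 - q^(2*n+2)) * (-q^k)^2 * V (q^(2*n)) k)
      = ∑ j ∈ range (k/2+1),
          (cc k j * q^(2*j*n) * Ej k j - cc k j * q^(2*(j+1)*n) * Fj k j) := by
    unfold V
    rw [Finset.mul_sum, Finset.mul_sum, Finset.mul_sum, ← Finset.sum_sub_distrib,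
        ← Finset.sum_sub_distrib]
    refine Finset.sum_congr rfl fun j hj => ?_
    unfold Ej Fj
    ring
  linear_combination h1 + key2

noncomputable def P (n : ℕ) : K := ∏ i ∈ range n, (1 - q^(2*i+1))

lemma P_ne (n : ℕ) : P n ≠ 0 :=
  Finset.prod_ne_zero_iff.mpr fun i _ => one_sub_ne (by omega)

lemma P_succ (n : ℕ) : P (n+1) = P n * (1 - q^(2*n+1)) := Finset.prod_range_succ _ _

lemma main (k : ℕ) (hk : 1 ≤ k) :
    ∀ n, Sa (-q^k) (2*n) = V (q^(2*n)) k * P n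
      ∧ Sa (-q^k) (2*n+2) = V (q^(2*(n+1))) k * P (n+1) := by
  intro n
  induction n with
  | zero =>
    constructor
    · rw [show 2*0 = 0 by rfl, Sa_zero, pow_zero, Wone k hk]
      unfold P
      rw [Finset.prod_range_zero]
      ring
    · rw [show 2*0+2 = 2 by rfl, Sa_two, show 2*(0+1) = 2 by rfl]
      have hP1 : P 1 = 1 - q^1 := by
        unfold P; rw [Finset.prod_range_one]
      rw [hP1]
      have hW := Wq2 k hk
      linear_combination -hW
  | succ m ih =>
    obtain ⟨ih1, ih2⟩ := ih
    constructor
    · rw [show 2*(m+1) = 2*m+2 by ring]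
      exact ih2
    · rw [show 2*(m+1)+2 = 2*m+4 by ring]
      rw [Sa_even_rec (-q^k) m, ih2, ih1]
      rw [show (m:ℕ)+1+1 = m+2 by ring]
      rw [P_succ (m+1), P_succ m]
      have hr := Rrec k m
      linear_combination (-(P m * (1 - q^(2*m+1)))) * hr

end Stmt18

/-- Theorem 2, formula (2.15): for `n ≥ 1`, `k ≥ 1`,
`r_{2n}(1,-q^k) / r_{2n}(1,-1) = Σ_{j=0}^{⌊k/2⌋} (-1)^j q^(j²) q^(2jn)
 ((1-q^k)/(1-q^(2k-2j))) [k-j choose j]_{q²} Π_{i=1}^{k-2j} (1+q^i)`. -/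
theorem stmt_18 (n k : ℕ) (hn : 1 ≤ n) (hk : 1 ≤ k) :
    (∑ l ∈ Finset.range (2 * n + 1), qb q (2 * n) l * (-q ^ k) ^ (2 * n - l))
        / ∏ i ∈ Finset.range n, (1 - q ^ (2 * i + 1))
      = ∑ j ∈ Finset.range (k / 2 + 1),
          (-1 : RatFunc ℚ) ^ j * q ^ (j ^ 2) * q ^ (2 * j * n)
            * ((1 - q ^ k) / (1 - q ^ (2 * k - 2 * j)))
            * qb (q ^ 2) ((k : ℤ) - j) j
            * ∏ i ∈ Finset.range (k - 2 * j), (1 + q ^ (i + 1)) := by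
  classical
  have eL : (∑ l ∈ Finset.range (2 * n + 1), qb q (2 * n) l * (-q ^ k) ^ (2 * n - l))
      = Stmt18.Sa (-q ^ k) (2 * n) := by
    unfold Stmt18.Sa
    refine Finset.sum_congr rfl fun l hl => ?_
    rw [show (2 * (n:ℤ)) = ((2 * n : ℕ) : ℤ) by push_cast; ring, Stmt18.qb_eq_B]
  have eP : (∏ i ∈ Finset.range n, (1 - q ^ (2 * i + 1))) = Stmt18.P n := rfl
  have eR : (∑ j ∈ Finset.range (k / 2 + 1),
          (-1 : RatFunc ℚ) ^ j * q ^ (j ^ 2) * q ^ (2 * j * n)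
            * ((1 - q ^ k) / (1 - q ^ (2 * k - 2 * j)))
            * qb (q ^ 2) ((k : ℤ) - j) j
            * ∏ i ∈ Finset.range (k - 2 * j), (1 + q ^ (i + 1)))
      = Stmt18.V (q ^ (2 * n)) k := by
    unfold Stmt18.V
    refine Finset.sum_congr rfl fun j hj => ?_
    unfold Stmt18.cc Stmt18.PP
    rw [show ((q : RatFunc ℚ) ^ (2 * n)) ^ j = q ^ (2 * j * n) by
      rw [← pow_mul, show 2 * n * j = 2 * j * n by ring]]
    ring
  rw [eL, eP, eR]
  rw [(Stmt18.main k hk n).1]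
  rw [mul_div_assoc, div_self (Stmt18.P_ne n), mul_one]
end

section
/- For all natural numbers n ≥ 1 and k ≥ 0, the identity r_{2n+1}(1,-q^{k+1}) - r_{2n+1}(1,-q^k) = q^k (1-q^{2n+1}) r_{2n}(1,-q^k) holds, where r_m(x,a) = Σ_ℓ [m choose ℓ]_q x^ℓ a^{m-ℓ}. -/
open Finset

/-- The key Pascal-type relation for Gaussian binomials:
`[2n+1 choose l] (1 - q^(2n+1-l)) = (1 - q^(2n+1)) [2n choose l]` for `l ≤ 2n`. -/
lemma key_s19 (n l : ℕ) (hl : l ≤ 2*n) :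
    qb q (2*n+1) l * (1 - q ^ (2*n+1-l)) = (1 - q ^ (2*n+1)) * qb q (2*n) l := by
  unfold qb
  rw [if_pos ⟨by positivity, by exact_mod_cast Nat.le_succ_of_le hl⟩,
      if_pos ⟨by positivity, by exact_mod_cast hl⟩]
  simp only [Int.toNat_natCast]
  rw [div_mul_eq_mul_div, ← mul_div_assoc]
  congr 1
  have B := Finset.prod_range_succ' (fun i : ℕ => 1 - q ^ ((2*(n:ℤ)+1) - i)) l
  rw [Finset.prod_range_succ] at B
  have hc : ((2*(n:ℤ)+1) - l) = ((2*n+1-l : ℕ) : ℤ) := by omega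
  rw [hc, zpow_natCast] at B
  rw [show ((2:ℤ)*n+1 - ((0:ℕ):ℤ)) = ((2*n+1 : ℕ):ℤ) by push_cast; ring, zpow_natCast] at B
  calc (∏ i ∈ Finset.range l, (1 - q ^ (2*(n:ℤ)+1 - i))) * (1 - q ^ (2*n+1-l))
      = (∏ i ∈ Finset.range l, (1 - q ^ (2*(n:ℤ)+1 - ((i:ℕ)+1:ℕ)))) * (1 - q ^ (2*n+1)) := B
    _ = (1 - q ^ (2*n+1)) * ∏ i ∈ Finset.range l, (1 - q ^ (2*(n:ℤ) - i)) := by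
        rw [mul_comm]; congr 1; apply Finset.prod_congr rfl; intro i _
        congr 1; push_cast; ring

/-- Relation (2.13): `r_{2n+1}(1,-q^(k+1)) - r_{2n+1}(1,-q^k) = q^k (1-q^(2n+1)) r_{2n}(1,-q^k)`. -/
theorem stmt_19 (n k : ℕ) (hn : 1 ≤ n) :
    (∑ l ∈ Finset.range (2 * n + 2), qb q (2 * n + 1) l * (-q ^ (k + 1)) ^ (2 * n + 1 - l))
      - (∑ l ∈ Finset.range (2 * n + 2), qb q (2 * n + 1) l * (-q ^ k) ^ (2 * n + 1 - l))
      = q ^ k * (1 - q ^ (2 * n + 1))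
        * ∑ l ∈ Finset.range (2 * n + 1), qb q (2 * n) l * (-q ^ k) ^ (2 * n - l) := by
  rw [← Finset.sum_sub_distrib, Finset.mul_sum, Finset.sum_range_succ]
  simp only [Nat.sub_self, pow_zero, mul_one, sub_self, add_zero]
  apply Finset.sum_congr rfl
  intro l hl
  have hl' : l ≤ 2*n := by simpa [Nat.lt_succ_iff] using hl
  have K := key_s19 n l hl'
  have he : 2*n+1-l = (2*n-l)+1 := by omega
  rw [he] at K ⊢
  rw [show (-q^(k+1) : RatFunc ℚ) = (-q^k)*q by ring]
  rw [mul_pow, pow_succ, pow_succ] at *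
  linear_combination ((-q^k)^(2*n-l) * q^k) * K
end
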